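/- arXiv:2007.05139 — 2 statements merged into one kernel-verified Lean document; each statement's English description precedes it below -/
import Mathlib

section
/- Any achievable rate R must satisfy R ≤ (1/n) ∑_{i=1}^{n} ∑_{a∈𝒳} min_{u} P(X_i = a | X_K = u), where the minimum is over all u ∈ 𝒳^{|K|} with P(X_K = u) > 0. That is, every faithful private mechanism has rate 1 − (1/n)·E[e(Y)] at most this quantity. -/
/-!
Let `Y` be the output of a faithful private mechanism. Position `i` is not erased exactly when
`Y_i = a` for some symbol `a`, so the rate is `(1/n) ∑ᵢ ∑ₐ P(Y_i = a)`. Faithfulness gives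
`{Y_i = a} ⊆ {X_i = a}`, and privacy makes `Y_i` independent of `X_K`, hence for every `u` with
`P(X_K = u) > 0`
`P(X_K = u) P(Y_i = a) = P(Y_i = a, X_K = u) ≤ P(X_i = a, X_K = u)`,
i.e. `P(Y_i = a) ≤ P(X_i = a | X_K = u)`. Taking the minimum over `u` bounds each term.
-/

open Finset
open scoped Classical

noncomputable section

namespace GenotypeHiding

variable {X : Type} [Fintype X] [DecidableEq X]

/-- Restriction of a sequence `x` to the sensitive positions `K`. -/
def restr {n : ℕ} (K : Finset (Fin n)) (x : Fin n → X) : ↥K → X := fun i => x (i : Fin n)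

/-- `P(X_K = u)` under the data distribution `p`. -/
def pK {n : ℕ} (p : (Fin n → X) → ℝ) (K : Finset (Fin n)) (u : ↥K → X) : ℝ :=
  ∑ x : Fin n → X, if restr K x = u then p x else 0

/-- `P(X_i = a ∧ X_K = u)` under the data distribution `p`. -/
def pIK {n : ℕ} (p : (Fin n → X) → ℝ) (K : Finset (Fin n)) (i : Fin n) (a : X)
    (u : ↥K → X) : ℝ :=
  ∑ x : Fin n → X, if x i = a ∧ restr K x = u then p x else 0

/-- `min_u P(X_i = a | X_K = u)`, the minimum being taken over all values `u` of the
sensitive positions with `P(X_K = u) > 0`. -/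
def minCond {n : ℕ} (p : (Fin n → X) → ℝ) (K : Finset (Fin n)) (i : Fin n) (a : X) : ℝ :=
  sInf {r : ℝ | ∃ u : ↥K → X, 0 < pK p K u ∧ r = pIK p K i a u / pK p K u}

/-- Number of erasures `e(y) = #{i : y_i = ∗}` in an output sequence. -/
def numErasures {n : ℕ} (y : Fin n → Option X) : ℕ :=
  (Finset.univ.filter (fun i : Fin n => y i = none)).card

/-- The rate `1 - (1/n) E[e(Y)]` of a mechanism `w` for the data distribution `p`. -/
def rate {n : ℕ} (p : (Fin n → X) → ℝ) (w : (Fin n → X) → (Fin n → Option X) → ℝ) : ℝ :=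
  1 - (1 / (n : ℝ)) *
    ∑ x : Fin n → X, ∑ y : Fin n → Option X, p x * w x y * (numErasures y : ℝ)

end GenotypeHiding

namespace GenotypeHiding

variable {X : Type} [Fintype X]

/-- The law `P(Y = y)` of the output of the mechanism `w`. -/
def outputLaw {n : ℕ} (p : (Fin n → X) → ℝ) (w : (Fin n → X) → (Fin n → Option X) → ℝ)
    (y : Fin n → Option X) : ℝ :=
  ∑ x : Fin n → X, p x * w x y

def IsFaithful {n : ℕ} (w : (Fin n → X) → (Fin n → Option X) → ℝ) : Prop :=
  ∀ x y, 0 < w x y → ∀ i : Fin n, y i = some (x i) ∨ y i = none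

theorem sum_outputLaw {n : ℕ} {p : (Fin n → X) → ℝ}
    {w : (Fin n → X) → (Fin n → Option X) → ℝ} (hw1 : ∀ x, ∑ y, w x y = 1) :
    ∑ y, outputLaw p w y = ∑ x, p x := by
  simp only [outputLaw]
  rw [Finset.sum_comm]
  simp only [← Finset.mul_sum, hw1, mul_one]

theorem expected_numErasures {n : ℕ} {p : (Fin n → X) → ℝ}
    {w : (Fin n → X) → (Fin n → Option X) → ℝ} :
    ∑ x, ∑ y, p x * w x y * (numErasures y : ℝ) =
      ∑ i, ∑ y with y i = none, outputLaw p w y := by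
  simp only [Finset.sum_filter]
  rw [Finset.sum_comm, Finset.sum_comm (γ := Fin n)]
  refine Finset.sum_congr rfl fun y _ => ?_
  rw [← Finset.sum_mul, numErasures, Finset.natCast_card_filter, Finset.mul_sum]
  simp [outputLaw]

variable [DecidableEq X]

/-- `P(Y_i = a)` for a non-erased symbol `a`. -/
def symbolProb {n : ℕ} (p : (Fin n → X) → ℝ) (w : (Fin n → X) → (Fin n → Option X) → ℝ)
    (i : Fin n) (a : X) : ℝ :=
  ∑ y with y i = some a, outputLaw p w y

def IsPrivate {n : ℕ} (p : (Fin n → X) → ℝ) (K : Finset (Fin n))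
    (w : (Fin n → X) → (Fin n → Option X) → ℝ) : Prop :=
  ∀ (u : ↥K → X) (y : Fin n → Option X),
    (∑ x : Fin n → X, if restr K x = u then p x * w x y else 0) = pK p K u * outputLaw p w y

section

variable {n : ℕ} {p : (Fin n → X) → ℝ} {w : (Fin n → X) → (Fin n → Option X) → ℝ}
  {K : Finset (Fin n)} {x : Fin n → X}

theorem sum_outputLaw_eq_erasure_add_sum_symbolProb (i : Fin n) :
    ∑ y, outputLaw p w y =
      ∑ y with y i = none, outputLaw p w y + ∑ a, symbolProb p w i a := by
  rw [← Finset.sum_fiberwise Finset.univ (fun y => y i), Fintype.sum_option]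
  rfl

theorem IsFaithful.sum_filter_eq_some_le (hw : IsFaithful w) (hw0 : ∀ y, 0 ≤ w x y)
    (hw1 : ∑ y, w x y = 1) (i : Fin n) (a : X) :
    ∑ y with y i = some a, w x y ≤ if x i = a then 1 else 0 := by
  split_ifs with hxa
  · exact hw1 ▸ Finset.sum_le_sum_of_subset_of_nonneg (Finset.filter_subset _ _)
      fun y _ _ => hw0 y
  · refine (Finset.sum_eq_zero fun y hy => ?_).le
    refine (hw0 y).eq_or_lt.elim Eq.symm fun hpos => ?_
    rcases hw x y hpos i with h | h <;> simp_all

theorem IsPrivate.pK_mul_symbolProb_le (hpriv : IsPrivate p K w) (hfaith : IsFaithful w)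
    (hp0 : ∀ x, 0 ≤ p x) (hw0 : ∀ x y, 0 ≤ w x y) (hw1 : ∀ x, ∑ y, w x y = 1)
    (u : ↥K → X) (i : Fin n) (a : X) :
    pK p K u * symbolProb p w i a ≤ pIK p K i a u :=
  calc pK p K u * symbolProb p w i a
      = ∑ x with restr K x = u, p x * ∑ y with y i = some a, w x y := by
        simp only [symbolProb, Finset.mul_sum, ← hpriv u, ← Finset.sum_filter]
        rw [Finset.sum_comm]
    _ ≤ ∑ x with restr K x = u, p x * if x i = a then 1 else 0 :=
        Finset.sum_le_sum fun x _ => mul_le_mul_of_nonneg_left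
          (hfaith.sum_filter_eq_some_le (hw0 x) (hw1 x) i a) (hp0 x)
    _ = pIK p K i a u := by
        simp only [pIK, Finset.sum_filter, mul_ite, mul_one, mul_zero, ite_and]
        exact Finset.sum_congr rfl fun x _ => by split_ifs <;> rfl

theorem rate_eq_sum_symbolProb (hn : n ≠ 0) (hw1 : ∀ x, ∑ y, w x y = 1)
    (hp1 : ∑ x, p x = 1) :
    rate p w = 1 / (n : ℝ) * ∑ i, ∑ a, symbolProb p w i a := by
  have herase (i : Fin n) : ∑ y with y i = none, outputLaw p w y =
      1 - ∑ a, symbolProb p w i a := by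
    have := sum_outputLaw_eq_erasure_add_sum_symbolProb (p := p) (w := w) i
    rw [sum_outputLaw hw1, hp1] at this
    linarith
  rw [rate, expected_numErasures, Finset.sum_congr rfl fun i _ => herase i,
    Finset.sum_sub_distrib]
  simp only [Finset.sum_const, Finset.card_univ, Fintype.card_fin, nsmul_eq_mul, mul_one]
  field_simp
  ring

theorem sum_pK : ∑ u, pK p K u = ∑ x, p x := by
  simp only [pK]
  rw [Finset.sum_comm]
  simp

theorem exists_pK_pos (hp1 : ∑ x, p x = 1) : ∃ u, 0 < pK p K u := by
  by_contra! h
  have := Finset.sum_nonpos fun u (_ : u ∈ Finset.univ) => h u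
  linarith [sum_pK (p := p) (K := K)]

theorem symbolProb_le_minCond (hpriv : IsPrivate p K w) (hfaith : IsFaithful w)
    (hp0 : ∀ x, 0 ≤ p x) (hp1 : ∑ x, p x = 1) (hw0 : ∀ x y, 0 ≤ w x y)
    (hw1 : ∀ x, ∑ y, w x y = 1) (i : Fin n) (a : X) :
    symbolProb p w i a ≤ minCond p K i a := by
  obtain ⟨u₀, hu₀⟩ := exists_pK_pos (K := K) hp1
  refine le_csInf ⟨_, u₀, hu₀, rfl⟩ ?_
  rintro _ ⟨u, hu, rfl⟩
  rw [le_div_iff₀ hu, mul_comm]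
  exact hpriv.pK_mul_symbolProb_le hfaith hp0 hw0 hw1 u i a

end

theorem achievableRate_le_general {n : ℕ} (hn : 1 ≤ n)
    (p : (Fin n → X) → ℝ) (hp0 : ∀ x, 0 ≤ p x) (hp1 : ∑ x : Fin n → X, p x = 1)
    (K : Finset (Fin n)) (R : ℝ)
    (hach : ∃ w : (Fin n → X) → (Fin n → Option X) → ℝ,
      (∀ x y, 0 ≤ w x y) ∧ (∀ x, ∑ y : Fin n → Option X, w x y = 1) ∧
      (∀ x y, 0 < w x y → ∀ i : Fin n, y i = some (x i) ∨ y i = none) ∧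
      (∀ (u : ↥K → X) (y : Fin n → Option X),
        (∑ x : Fin n → X, if restr K x = u then p x * w x y else 0)
          = pK p K u * ∑ x : Fin n → X, p x * w x y) ∧
      R ≤ rate p w) :
    R ≤ (1 / (n : ℝ)) * ∑ i : Fin n, ∑ a : X, minCond p K i a := by
  obtain ⟨w, hw0, hw1, hfaith, hpriv, hR⟩ := hach
  calc R ≤ rate p w := hR
    _ = 1 / (n : ℝ) * ∑ i, ∑ a, symbolProb p w i a :=
        rate_eq_sum_symbolProb (by omega) hw1 hp1
    _ ≤ 1 / (n : ℝ) * ∑ i, ∑ a, minCond p K i a := by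
        gcongr with i _ a _
        exact symbolProb_le_minCond hpriv hfaith hp0 hp1 hw0 hw1 i a

/-- any achievable rate `R` satisfies
`R ≤ (1/n) ∑_i ∑_a min_u P(X_i = a | X_K = u)`; that is, every faithful private
mechanism has rate at most this quantity. -/
theorem achievableRate_le {n : ℕ} (hn : 1 ≤ n) (hX : 2 ≤ Fintype.card X)
    (p : (Fin n → X) → ℝ) (hp0 : ∀ x, 0 ≤ p x) (hp1 : ∑ x : Fin n → X, p x = 1)
    (K : Finset (Fin n)) (R : ℝ)
    (hach : ∃ w : (Fin n → X) → (Fin n → Option X) → ℝ,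
      (∀ x y, 0 ≤ w x y) ∧ (∀ x, ∑ y : Fin n → Option X, w x y = 1) ∧
      (∀ x y, 0 < w x y → ∀ i : Fin n, y i = some (x i) ∨ y i = none) ∧
      (∀ (u : ↥K → X) (y : Fin n → Option X),
        (∑ x : Fin n → X, if restr K x = u then p x * w x y else 0)
          = pK p K u * ∑ x : Fin n → X, p x * w x y) ∧
      R ≤ rate p w) :
    R ≤ (1 / (n : ℝ)) * ∑ i : Fin n, ∑ a : X, minCond p K i a :=
  achievableRate_le_general hn p hp0 hp1 K R hach

end GenotypeHiding
end
end

section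
/- The output Y = (Y_1,…,Y_n) of the sequential privacy mechanism is statistically independent of the sensitive values X_K; equivalently, the joint probability mass function of (X_K, Y) factorizes as the product of its marginals, i.e., the mutual information I(X_K; Y) equals zero. -/
/-!
Write `P(u, h; t) = P(X_K = u, Y_{[t]} = h_{[t]})`. We show by induction on `t` that
`P(u, h; t) = P(X_K = u) · P(Y_{[t]} = h_{[t]})`; at `t = n` this is the claim. The mechanism
is designed so that passing from `t` to `t + 1` multiplies `P(u, h; t)` by a factor that does
not depend on `u`: summed over all `x` with `x_K = u`, releasing `Y_t = a` has total mass
`min_u' P(X_t = a | X_K = u', Y_{[t]}) · P(u, h; t)`, because the release probability cancels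
the conditional law of `X_t` given `X_K = u`; erasing has the complementary mass
`(1 - ∑_a min_u' P(X_t = a | X_K = u', Y_{[t]})) · P(u, h; t)`.
-/

open Finset
open scoped Classical

noncomputable section

namespace GenotypeHiding

variable {X : Type} [Fintype X] [DecidableEq X]

/-- `y` agrees with the history `h` on all coordinates `j` with `j < t`
(i.e. the event `Y_{[t]} = h_{[t]}`, zero-based). -/
def agreeN {n : ℕ} (t : ℕ) (y h : Fin n → Option X) : Prop :=
  ∀ j : Fin n, (j : ℕ) < t → y j = h j

/-- `P(X = x, Y_{[t]} = h_{[t]})` under the joint law `J` of `(X, Y)`. -/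
def prXH {n : ℕ} (J : (Fin n → X) → (Fin n → Option X) → ℝ) (t : ℕ)
    (x : Fin n → X) (h : Fin n → Option X) : ℝ :=
  ∑ y : Fin n → Option X, if agreeN t y h then J x y else 0

/-- `P(Y_i = b, X = x, Y_{[t]} = h_{[t]})` under the joint law `J`. -/
def prXHY {n : ℕ} (J : (Fin n → X) → (Fin n → Option X) → ℝ) (t : ℕ)
    (x : Fin n → X) (h : Fin n → Option X) (i : Fin n) (b : Option X) : ℝ :=
  ∑ y : Fin n → Option X, if y i = b ∧ agreeN t y h then J x y else 0

/-- `P(Y_{[t]} = h_{[t]})` under the joint law `J`. -/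
def prH {n : ℕ} (J : (Fin n → X) → (Fin n → Option X) → ℝ) (t : ℕ)
    (h : Fin n → Option X) : ℝ :=
  ∑ x : Fin n → X, prXH J t x h

/-- `P(X_K = u, Y_{[t]} = h_{[t]})` under the joint law `J`. -/
def prKH {n : ℕ} (J : (Fin n → X) → (Fin n → Option X) → ℝ) (K : Finset (Fin n))
    (t : ℕ) (u : ↥K → X) (h : Fin n → Option X) : ℝ :=
  ∑ x : Fin n → X, ∑ y : Fin n → Option X,
    if restr K x = u ∧ agreeN t y h then J x y else 0

/-- `P(X_i = a, X_K = u, Y_{[t]} = h_{[t]})` under the joint law `J`. -/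
def prIKH {n : ℕ} (J : (Fin n → X) → (Fin n → Option X) → ℝ) (K : Finset (Fin n))
    (t : ℕ) (i : Fin n) (a : X) (u : ↥K → X) (h : Fin n → Option X) : ℝ :=
  ∑ x : Fin n → X, ∑ y : Fin n → Option X,
    if x i = a ∧ restr K x = u ∧ agreeN t y h then J x y else 0

/-- `P(Y_i = b, X_K = u, Y_{[t]} = h_{[t]})` under the joint law `J`. -/
def prYKH {n : ℕ} (J : (Fin n → X) → (Fin n → Option X) → ℝ) (K : Finset (Fin n))
    (t : ℕ) (i : Fin n) (b : Option X) (u : ↥K → X) (h : Fin n → Option X) : ℝ :=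
  ∑ x : Fin n → X, ∑ y : Fin n → Option X,
    if y i = b ∧ restr K x = u ∧ agreeN t y h then J x y else 0

/-- `P(X_i = a | X_K = u, Y_{[t]} = h_{[t]})` under the joint law `J`. -/
def condX {n : ℕ} (J : (Fin n → X) → (Fin n → Option X) → ℝ) (K : Finset (Fin n))
    (t : ℕ) (i : Fin n) (a : X) (u : ↥K → X) (h : Fin n → Option X) : ℝ :=
  prIKH J K t i a u h / prKH J K t u h

/-- `min_u P(X_i = a | X_K = u, Y_{[t]} = h_{[t]})`, the minimum being over all `u` with
`P(X_K = u, Y_{[t]} = h_{[t]}) > 0`. -/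
def minC {n : ℕ} (J : (Fin n → X) → (Fin n → Option X) → ℝ) (K : Finset (Fin n))
    (t : ℕ) (i : Fin n) (a : X) (h : Fin n → Option X) : ℝ :=
  sInf {r : ℝ | ∃ u : ↥K → X, 0 < prKH J K t u h ∧ r = condX J K t i a u h}

/-- `J` is the joint law of `(X, Y)` where `Y` is generated from `X ∼ p` by the sequential
privacy mechanism: `Y_i ∈ {X_i, ∗}`, and conditionally on `X = x` and the previously
generated outputs `Y_{[i-1]} = y_{[i-1]}`, the mechanism releases `Y_i = x_i` with
probability `min_u P(X_i = x_i | X_K = u, Y_{[i-1]}) / P(X_i = x_i | X_K = x_K, Y_{[i-1]})`,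
and erases (`Y_i = ∗`) with the complementary probability. -/
def IsSequentialMechanism {n : ℕ} (p : (Fin n → X) → ℝ) (K : Finset (Fin n))
    (J : (Fin n → X) → (Fin n → Option X) → ℝ) : Prop :=
  (∀ x y, 0 ≤ J x y) ∧
  (∀ x, ∑ y : Fin n → Option X, J x y = p x) ∧
  (∀ x y, 0 < J x y → ∀ i : Fin n, y i = some (x i) ∨ y i = none) ∧
  (∀ (i : Fin n) (x : Fin n → X) (h : Fin n → Option X), 0 < prXH J (i : ℕ) x h →
    prXHY J (i : ℕ) x h i (some (x i))
      = (minC J K (i : ℕ) i (x i) h / condX J K (i : ℕ) i (x i) (restr K x) h)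
          * prXH J (i : ℕ) x h)

section History

variable {α : Type} {n : ℕ}

lemma agreeN_zero (y h : Fin n → Option α) : agreeN 0 y h :=
  fun _ hj => absurd hj (Nat.not_lt_zero _)

lemma agreeN_iff_eq {t : ℕ} (ht : n ≤ t) (y h : Fin n → Option α) :
    agreeN t y h ↔ y = h :=
  ⟨fun H => funext fun j => H j (j.isLt.trans_le ht), fun H _ _ => H ▸ rfl⟩

lemma agreeN_succ (i : Fin n) (y h : Fin n → Option α) :
    agreeN ((i : ℕ) + 1) y h ↔ y i = h i ∧ agreeN i y h := by
  refine ⟨fun H => ⟨H i i.val.lt_succ_self, fun j hj => H j (Nat.lt_succ_of_lt hj)⟩, ?_⟩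
  rintro ⟨hi, H⟩ j hj
  rcases Nat.lt_succ_iff_lt_or_eq.mp hj with hj | hj
  · exact H j hj
  · exact Fin.ext hj ▸ hi

end History

section JointLaw

variable {α : Type} [Fintype α] {n : ℕ} {J : (Fin n → α) → (Fin n → Option α) → ℝ}

lemma prXH_zero (x : Fin n → α) (h : Fin n → Option α) :
    prXH J 0 x h = ∑ y, J x y := by
  simp [prXH, agreeN_zero]

lemma prXH_of_le {t : ℕ} (ht : n ≤ t) (x : Fin n → α) (h : Fin n → Option α) :
    prXH J t x h = J x h := by
  simp [prXH, agreeN_iff_eq ht]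

lemma prXH_nonneg (hJ0 : ∀ x y, 0 ≤ J x y) (t : ℕ) (x : Fin n → α) (h : Fin n → Option α) :
    0 ≤ prXH J t x h :=
  sum_nonneg fun y _ => ite_nonneg (hJ0 x y) le_rfl

end JointLaw

section Marginals

variable {n : ℕ} {K : Finset (Fin n)} {J : (Fin n → X) → (Fin n → Option X) → ℝ}

lemma prKH_eq_sum_prXH (t : ℕ) (u : ↥K → X) (h : Fin n → Option X) :
    prKH J K t u h = ∑ x, if restr K x = u then prXH J t x h else 0 := by
  simp [prKH, prXH, ite_and, sum_ite_irrel]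

lemma prIKH_eq_sum_prXH (t : ℕ) (i : Fin n) (a : X) (u : ↥K → X) (h : Fin n → Option X) :
    prIKH J K t i a u h = ∑ x, if x i = a ∧ restr K x = u then prXH J t x h else 0 := by
  simp [prIKH, prXH, ← and_assoc, ite_and, sum_ite_irrel]

lemma prKH_succ (i : Fin n) (u : ↥K → X) (h : Fin n → Option X) :
    prKH J K ((i : ℕ) + 1) u h
      = ∑ x, if restr K x = u then prXHY J i x h i (h i) else 0 := by
  simp [prKH, prXHY, agreeN_succ, ite_and, sum_ite_irrel]

lemma sum_prKH (t : ℕ) (h : Fin n → Option X) : ∑ u, prKH J K t u h = prH J t h := by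
  simp [prKH_eq_sum_prXH, prH, sum_comm (γ := ↥K → X), sum_ite_eq]

lemma prXHY_nonneg (hJ0 : ∀ x y, 0 ≤ J x y) (t : ℕ) (x : Fin n → X) (h : Fin n → Option X)
    (i : Fin n) (b : Option X) : 0 ≤ prXHY J t x h i b :=
  sum_nonneg fun y _ => ite_nonneg (hJ0 x y) le_rfl

lemma prXHY_le_prXH (hJ0 : ∀ x y, 0 ≤ J x y) (t : ℕ) (x : Fin n → X) (h : Fin n → Option X)
    (i : Fin n) (b : Option X) : prXHY J t x h i b ≤ prXH J t x h :=
  sum_le_sum fun y _ => by split_ifs <;> simp_all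

lemma prKH_nonneg (hJ0 : ∀ x y, 0 ≤ J x y) (t : ℕ) (u : ↥K → X) (h : Fin n → Option X) :
    0 ≤ prKH J K t u h :=
  sum_nonneg fun x _ => sum_nonneg fun y _ => ite_nonneg (hJ0 x y) le_rfl

lemma prIKH_nonneg (hJ0 : ∀ x y, 0 ≤ J x y) (t : ℕ) (i : Fin n) (a : X) (u : ↥K → X)
    (h : Fin n → Option X) : 0 ≤ prIKH J K t i a u h :=
  sum_nonneg fun x _ => sum_nonneg fun y _ => ite_nonneg (hJ0 x y) le_rfl

lemma prIKH_le_prKH (hJ0 : ∀ x y, 0 ≤ J x y) (t : ℕ) (i : Fin n) (a : X) (u : ↥K → X)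
    (h : Fin n → Option X) : prIKH J K t i a u h ≤ prKH J K t u h := by
  rw [prIKH_eq_sum_prXH, prKH_eq_sum_prXH]
  exact sum_le_sum fun x _ => by split_ifs <;> simp_all [prXH_nonneg hJ0]

lemma minC_eq_zero_of_condX_eq_zero (hJ0 : ∀ x y, 0 ≤ J x y) {t : ℕ} {i : Fin n} {a : X}
    {u : ↥K → X} {h : Fin n → Option X} (hK : 0 < prKH J K t u h)
    (hc : condX J K t i a u h = 0) : minC J K t i a h = 0 := by
  have hmem : (0 : ℝ) ∈ {r | ∃ u', 0 < prKH J K t u' h ∧ r = condX J K t i a u' h} :=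
    ⟨u, hK, hc.symm⟩
  have hlb : ∀ r ∈ {r | ∃ u', 0 < prKH J K t u' h ∧ r = condX J K t i a u' h}, (0 : ℝ) ≤ r := by
    rintro r ⟨u', -, rfl⟩
    exact div_nonneg (prIKH_nonneg hJ0 t i a u' h) (prKH_nonneg hJ0 t u' h)
  exact le_antisymm (csInf_le ⟨0, hlb⟩ hmem) (le_csInf ⟨0, hmem⟩ hlb)

-- If `prIKH u = 0` the quotient is a junk value, but both sides vanish: either `prKH u = 0`,
-- or `u` is a candidate of the minimum with `condX u = 0`.
lemma minC_div_condX_mul_prIKH (hJ0 : ∀ x y, 0 ≤ J x y) (t : ℕ) (i : Fin n) (a : X)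
    (u : ↥K → X) (h : Fin n → Option X) :
    minC J K t i a h / condX J K t i a u h * prIKH J K t i a u h
      = minC J K t i a h * prKH J K t u h := by
  rcases (prIKH_nonneg hJ0 t i a u h).eq_or_lt with hI | hI
  · rcases (prKH_nonneg hJ0 t u h).eq_or_lt with hK | hK
    · rw [← hI, ← hK, mul_zero, mul_zero]
    · rw [minC_eq_zero_of_condX_eq_zero hJ0 hK (by rw [condX, ← hI, zero_div])]
      simp
  · rw [condX, div_div_eq_mul_div, div_mul_cancel₀ _ hI.ne']

end Marginals

section Mechanism

variable {n : ℕ} {p : (Fin n → X) → ℝ} {K : Finset (Fin n)}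
  {J : (Fin n → X) → (Fin n → Option X) → ℝ}

lemma J_eq_zero_of_ne (hJ : IsSequentialMechanism p K J) {x : Fin n → X} {y : Fin n → Option X}
    {i : Fin n} (hsome : y i ≠ some (x i)) (hnone : y i ≠ none) : J x y = 0 :=
  (hJ.1 x y).eq_or_lt.elim Eq.symm fun hpos => ((hJ.2.2.1 x y hpos i).elim hsome hnone).elim

lemma prXHY_some_of_ne (hJ : IsSequentialMechanism p K J) (t : ℕ) {x : Fin n → X}
    (h : Fin n → Option X) {i : Fin n} {a : X} (hxa : x i ≠ a) :
    prXHY J t x h i (some a) = 0 :=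
  sum_eq_zero fun y _ => by
    split_ifs with hy
    · exact J_eq_zero_of_ne hJ (i := i) (by simpa [hy.1] using Ne.symm hxa) (by simp [hy.1])
    · rfl

lemma prXH_eq_add (hJ : IsSequentialMechanism p K J) (t : ℕ) (i : Fin n) (x : Fin n → X)
    (h : Fin n → Option X) :
    prXH J t x h = prXHY J t x h i (some (x i)) + prXHY J t x h i none := by
  rw [prXHY, prXHY, ← sum_add_distrib]
  refine sum_congr rfl fun y _ => ?_
  by_cases hsome : y i = some (x i)
  · simp [hsome]
  by_cases hnone : y i = none
  · simp [hnone]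
  simp [J_eq_zero_of_ne hJ hsome hnone]

lemma prXHY_release (hJ : IsSequentialMechanism p K J) (i : Fin n) (x : Fin n → X)
    (h : Fin n → Option X) :
    prXHY J i x h i (some (x i))
      = minC J K i i (x i) h / condX J K i i (x i) (restr K x) h * prXH J i x h := by
  rcases (prXH_nonneg hJ.1 i x h).eq_or_lt with h0 | hpos
  · rw [← h0, mul_zero]
    exact le_antisymm (h0 ▸ prXHY_le_prXH hJ.1 i x h i _) (prXHY_nonneg hJ.1 i x h i _)
  · exact hJ.2.2.2 i x h hpos

lemma sum_prXHY_some (hJ : IsSequentialMechanism p K J) (i : Fin n) (h : Fin n → Option X)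
    (u : ↥K → X) (a : X) :
    (∑ x, if restr K x = u then prXHY J i x h i (some a) else 0)
      = minC J K i i a h * prKH J K i u h := by
  calc (∑ x, if restr K x = u then prXHY J i x h i (some a) else 0)
      = ∑ x, if x i = a ∧ restr K x = u then
          minC J K i i a h / condX J K i i a u h * prXH J i x h else 0 := by
        refine sum_congr rfl fun x _ => ?_
        by_cases hxa : x i = a
        · subst hxa
          by_cases hr : restr K x = u
          · simp [hr, prXHY_release hJ]
          · simp [hr]
        · simp [hxa, prXHY_some_of_ne hJ _ h hxa]
    _ = minC J K i i a h / condX J K i i a u h * prIKH J K i i a u h := by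
        simp [prIKH_eq_sum_prXH, mul_sum, mul_ite]
    _ = minC J K i i a h * prKH J K i u h := minC_div_condX_mul_prIKH hJ.1 _ i a u h

lemma sum_prXHY_none (hJ : IsSequentialMechanism p K J) (i : Fin n) (h : Fin n → Option X)
    (u : ↥K → X) :
    (∑ x, if restr K x = u then prXHY J i x h i none else 0)
      = (1 - ∑ a, minC J K i i a h) * prKH J K i u h := by
  have hsplit : (∑ x, if restr K x = u then prXHY J i x h i none else 0)
      = prKH J K i u h - ∑ x, if restr K x = u then prXHY J i x h i (some (x i)) else 0 := by
    rw [prKH_eq_sum_prXH, ← sum_sub_distrib]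
    refine sum_congr rfl fun x _ => ?_
    split_ifs
    · rw [prXH_eq_add hJ i i x h]; ring
    · ring
  have hsome : (∑ x, if restr K x = u then prXHY J i x h i (some (x i)) else 0)
      = ∑ a, ∑ x, if restr K x = u then prXHY J i x h i (some a) else 0 := by
    rw [sum_comm]
    refine sum_congr rfl fun x _ => ?_
    rw [sum_eq_single (x i) (fun a _ ha => by simp [prXHY_some_of_ne hJ i h (Ne.symm ha)])
      (by simp)]
  rw [hsplit, hsome, sum_congr rfl fun a _ => sum_prXHY_some hJ i h u a, ← sum_mul]
  ring

lemma prKH_succ_eq_mul (hJ : IsSequentialMechanism p K J) (i : Fin n) (h : Fin n → Option X) :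
    ∃ c, ∀ u, prKH J K ((i : ℕ) + 1) u h = c * prKH J K i u h := by
  rcases hhi : h i with _ | a
  · exact ⟨_, fun u => by rw [prKH_succ, hhi, sum_prXHY_none hJ]⟩
  · exact ⟨_, fun u => by rw [prKH_succ, hhi, sum_prXHY_some hJ]⟩

lemma prKH_eq_mul_prH (hJ : IsSequentialMechanism p K J) (hp1 : ∑ x, p x = 1) {t : ℕ}
    (ht : t ≤ n) (u : ↥K → X) (h : Fin n → Option X) :
    prKH J K t u h = (∑ x, if restr K x = u then p x else 0) * prH J t h := by
  induction t with
  | zero => simp [prKH_eq_sum_prXH, prH, prXH_zero, hJ.2.1, hp1]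
  | succ t ih =>
    obtain ⟨c, hc⟩ := prKH_succ_eq_mul hJ ⟨t, ht⟩ h
    have hH : prH J (t + 1) h = c * prH J t h := by
      rw [← sum_prKH, ← sum_prKH, mul_sum]
      exact sum_congr rfl fun u _ => hc u
    rw [hc u, hH, ih (by omega)]
    ring

end Mechanism

theorem sequentialMechanism_private_general {n : ℕ}
    (p : (Fin n → X) → ℝ) (hp1 : ∑ x : Fin n → X, p x = 1)
    (K : Finset (Fin n))
    (J : (Fin n → X) → (Fin n → Option X) → ℝ)
    (hJ : IsSequentialMechanism p K J) :
    ∀ (u : ↥K → X) (y : Fin n → Option X),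
      (∑ x : Fin n → X, if restr K x = u then J x y else 0)
        = (∑ x : Fin n → X, if restr K x = u then p x else 0)
            * (∑ x : Fin n → X, J x y) := by
  intro u y
  simpa [prKH_eq_sum_prXH, prH, prXH_of_le le_rfl] using prKH_eq_mul_prH hJ hp1 le_rfl u y

/-- the output `Y` of the sequential privacy mechanism is statistically
independent of the sensitive values `X_K`: the joint probability mass function of
`(X_K, Y)` factorizes as the product of its marginals (equivalently, `I(X_K; Y) = 0`). -/
theorem sequentialMechanism_private {n : ℕ} (hn : 1 ≤ n) (hX : 2 ≤ Fintype.card X)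
    (p : (Fin n → X) → ℝ) (hp0 : ∀ x, 0 ≤ p x) (hp1 : ∑ x : Fin n → X, p x = 1)
    (K : Finset (Fin n))
    (J : (Fin n → X) → (Fin n → Option X) → ℝ)
    (hJ : IsSequentialMechanism p K J) :
    ∀ (u : ↥K → X) (y : Fin n → Option X),
      (∑ x : Fin n → X, if restr K x = u then J x y else 0)
        = (∑ x : Fin n → X, if restr K x = u then p x else 0)
            * (∑ x : Fin n → X, J x y) :=
  sequentialMechanism_private_general p hp1 K J hJ

end GenotypeHiding
end
end
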